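/- Assume β + λω_k ≠ 0 for all k = 0,…,N−1 (so that β·I_N + λA is invertible). Then: (i) for each k = 0,…,N−1 the vector (u_k, 0) ∈ ℂ^{2N} is an eigenvector of B for the eigenvalue λω_k; (ii) for each n = 1,…,N the vector (−(β·I_N + λA)^{−1} A e_n, e_n) ∈ ℂ^{2N}, where e_n is the n-th standard basis vector of ℂ^N, is an eigenvector of B for the eigenvalue −β; (iii) these 2N vectors form a basis of ℂ^{2N}, so B is diagonalizable over ℂ. -/

import Mathlib

open Matrix Complex Finset

noncomputable section

/-- The N×N matrix with -1 on the diagonal and 1 on the (cyclic) superdiagonal. -/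
def ringMat (N : ℕ) : Matrix (Fin N) (Fin N) ℝ :=
  fun n m => if (m : ℕ) = (n : ℕ) then -1 else if (m : ℕ) = ((n : ℕ) + 1) % N then 1 else 0

/-- Complexification of `ringMat`. -/
def Ac (N : ℕ) : Matrix (Fin N) (Fin N) ℂ := (ringMat N).map Complex.ofReal

/-- γ_k = e^{2πik/N} -/
def gam (N k : ℕ) : ℂ := Complex.exp (2 * Real.pi * Complex.I * k / N)

/-- u_k = (γ_k^0, γ_k^1, …, γ_k^{N-1}). -/
def uVec (N k : ℕ) : Fin N → ℂ := fun n => gam N k ^ (n : ℕ)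

/-- The 2N×2N block matrix B = [[λA, A], [0, −β I_N]] (complexified). -/
def blockB (N : ℕ) (lam beta : ℝ) : Matrix (Fin N ⊕ Fin N) (Fin N ⊕ Fin N) ℂ :=
  Matrix.fromBlocks ((lam : ℂ) • Ac N) (Ac N) 0 (-(beta : ℂ) • 1)

/-- The eigenvector (u_k, 0) of B for the eigenvalue λω_k. -/
def eigvecTop (N k : ℕ) : Fin N ⊕ Fin N → ℂ := Sum.elim (uVec N k) 0

/-- The eigenvector (−(βI_N + λA)⁻¹ A e_n, e_n) of B for the eigenvalue −β. -/
def eigvecBot (N : ℕ) (lam beta : ℝ) (n : Fin N) : Fin N ⊕ Fin N → ℂ :=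
  Sum.elim
    (-(((beta : ℂ) • (1 : Matrix (Fin N) (Fin N) ℂ) + (lam : ℂ) • Ac N)⁻¹.mulVec
        ((Ac N).mulVec (Pi.single n 1))))
    (Pi.single n 1)

/-! Multiplication by `A` is the cyclic shift minus the identity, so the rows `u_k` of the
Vandermonde matrix of the `N`-th roots of unity `γ_k` satisfy `A u_k = ω_k u_k`. As that
Vandermonde matrix is invertible, `det (βI + λA) = ∏ (β + λω_k) ≠ 0`, and the eigenvector
equations reduce to blockwise identities for the block upper-triangular `B`. The `2N` vectors
are the rows of a block lower-triangular matrix with diagonal blocks the Vandermonde matrix and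
`I_N`, hence independent. -/

section BlockTriangular

variable {m n R : Type*} [Fintype m] [Fintype n] [CommRing R]

theorem fromBlocks_zero₂₁_mulVec_sumElim_zero {P : Matrix m m R} {x : m → R} {μ : R}
    (Q : Matrix m n R) (S : Matrix n n R) (hx : P *ᵥ x = μ • x) :
    fromBlocks P Q 0 S *ᵥ Sum.elim x 0 = μ • Sum.elim x 0 := by
  ext (i | i) <;> simp [fromBlocks_mulVec, hx]

theorem fromBlocks_zero₂₁_smul_one_mulVec_sumElim [DecidableEq m] [DecidableEq n]
    {P : Matrix m m R} {Q : Matrix m n R} {μ : R} {x : m → R} {e : n → R}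
    (h : (μ • 1 - P) *ᵥ x = Q *ᵥ e) :
    fromBlocks P Q 0 (μ • 1) *ᵥ Sum.elim x e = μ • Sum.elim x e := by
  rw [sub_mulVec, smul_mulVec, one_mulVec] at h
  ext (i | i) <;> simp [fromBlocks_mulVec, ← h, smul_mulVec]

theorem det_eq_det_toBlocks₁₁ [DecidableEq m] [DecidableEq n]
    {M : Matrix (m ⊕ n) (m ⊕ n) R} (h₁₂ : M.toBlocks₁₂ = 0)
    (h₂₂ : M.toBlocks₂₂ = 1) :
    M.det = M.toBlocks₁₁.det := by
  conv_lhs => rw [← fromBlocks_toBlocks M, h₁₂, h₂₂, det_fromBlocks_zero₁₂]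
  rw [det_one, mul_one]

end BlockTriangular

theorem det_eq_prod_of_mulVec_eq_smul {n R : Type*} [Fintype n] [DecidableEq n] [CommRing R]
    {M V : Matrix n n R} {d : n → R} (hV : IsUnit V.det) (h : ∀ i, M *ᵥ V i = d i • V i) :
    M.det = ∏ i, d i := by
  have hMV : M * Vᵀ = Vᵀ * diagonal d := by
    ext i j
    rw [mul_diagonal, mul_apply]
    simpa [mulVec, dotProduct, mul_comm] using congrFun (h j) i
  have := congrArg det hMV
  rw [det_mul, det_mul, det_transpose, det_diagonal, mul_comm V.det] at this
  exact hV.mul_right_cancel this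

def cycSucc {N : ℕ} (n : Fin N) : Fin N := ⟨(n + 1) % N, Nat.mod_lt _ n.pos⟩

theorem cycSucc_ne {N : ℕ} (hN : 2 ≤ N) (n : Fin N) : cycSucc n ≠ n := by
  intro h
  have h' : ((n : ℕ) + 1) % N = n := congrArg Fin.val h
  rcases Nat.lt_or_ge ((n : ℕ) + 1) N with hlt | hge
  · rw [Nat.mod_eq_of_lt hlt] at h'; omega
  · rw [show (n : ℕ) + 1 = N by omega, Nat.mod_self] at h'; omega

-- For `N = 1` the diagonal entry shadows the wrap-around one, and `Ac 1 = -1`.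
theorem Ac_row {N : ℕ} (hN : 2 ≤ N) (n : Fin N) :
    Ac N n = Pi.single (cycSucc n) 1 - Pi.single n 1 := by
  ext m
  have hne := cycSucc_ne hN n
  by_cases hmn : m = n
  · subst hmn; simp [Ac, ringMat, Ne.symm hne]
  · simp only [Ac, ringMat, map_apply, Fin.val_eq_val, hmn, if_false, Pi.sub_apply,
      Pi.single_apply, Fin.ext_iff, cycSucc]
    split_ifs <;> simp

theorem Ac_mulVec_apply {N : ℕ} (hN : 2 ≤ N) (v : Fin N → ℂ) (n : Fin N) :
    (Ac N *ᵥ v) n = v (cycSucc n) - v n := by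
  rw [mulVec, Ac_row hN, sub_dotProduct, single_one_dotProduct, single_one_dotProduct]

theorem gam_eq_pow (N k : ℕ) : gam N k = exp (2 * Real.pi * I / N) ^ k := by
  rw [gam, ← exp_nat_mul]; ring_nf

theorem gam_pow_self {N : ℕ} (hN : N ≠ 0) (k : ℕ) : gam N k ^ N = 1 := by
  rw [gam_eq_pow, ← pow_mul, mul_comm k N, pow_mul, (isPrimitiveRoot_exp N hN).pow_eq_one,
    one_pow]

theorem Ac_mulVec_uVec {N : ℕ} (hN : 2 ≤ N) (k : ℕ) :
    Ac N *ᵥ uVec N k = (gam N k - 1) • uVec N k := by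
  ext n
  have hwrap : gam N k ^ (((n : ℕ) + 1) % N) = gam N k ^ ((n : ℕ) + 1) :=
    (pow_eq_pow_mod _ (gam_pow_self (by omega) k)).symm
  simp only [Ac_mulVec_apply hN, uVec, cycSucc, hwrap, Pi.smul_apply, smul_eq_mul]
  ring

theorem det_vandermonde_gam_ne_zero {N : ℕ} (hN : N ≠ 0) :
    (vandermonde fun k : Fin N => gam N k).det ≠ 0 := by
  rw [det_vandermonde_ne_zero_iff]
  intro j k hjk
  simp only [gam_eq_pow] at hjk
  exact Fin.ext ((isPrimitiveRoot_exp N hN).pow_inj j.isLt k.isLt hjk)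

theorem det_smul_one_add_smul_Ac {N : ℕ} (hN : 2 ≤ N) (β l : ℂ) :
    (β • 1 + l • Ac N).det = ∏ k : Fin N, (β + l * (gam N k - 1)) := by
  refine det_eq_prod_of_mulVec_eq_smul (V := vandermonde fun k : Fin N => gam N k)
    (det_vandermonde_gam_ne_zero (by omega)).isUnit fun k => ?_
  change _ *ᵥ uVec N k = _ • uVec N k
  rw [add_mulVec, smul_mulVec, smul_mulVec, one_mulVec, Ac_mulVec_uVec hN, smul_smul, ← add_smul]

theorem det_of_eigvecTop_eigvecBot_ne_zero {N : ℕ} (hN : N ≠ 0) (lam beta : ℝ) :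
    (Matrix.of (Sum.elim (fun k : Fin N => eigvecTop N k) (eigvecBot N lam beta))).det ≠ 0 := by
  rw [det_eq_det_toBlocks₁₁ (by ext; simp [toBlocks₁₂, eigvecTop])
    (by ext; simp [toBlocks₂₂, eigvecBot, one_apply, Pi.single_apply, eq_comm])]
  convert det_vandermonde_gam_ne_zero hN using 2
  ext k n
  simp [toBlocks₁₁, eigvecTop, uVec, vandermonde]

theorem stmt6_general (N : ℕ) (hN : 2 ≤ N) (lam beta : ℝ)
    (hinv : ∀ k < N, (beta : ℂ) + lam * (gam N k - 1) ≠ 0) :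
    (∀ k < N, (blockB N lam beta).mulVec (eigvecTop N k) =
        ((lam : ℂ) * (gam N k - 1)) • eigvecTop N k) ∧
    (∀ n : Fin N, (blockB N lam beta).mulVec (eigvecBot N lam beta n) =
        (-(beta : ℂ)) • eigvecBot N lam beta n) ∧
    LinearIndependent ℂ
      (Sum.elim (fun k : Fin N => eigvecTop N (k : ℕ)) (eigvecBot N lam beta)) ∧
    Submodule.span ℂ
        (Set.range (Sum.elim (fun k : Fin N => eigvecTop N (k : ℕ)) (eigvecBot N lam beta)))
      = ⊤ := by
  set M := (beta : ℂ) • (1 : Matrix (Fin N) (Fin N) ℂ) + (lam : ℂ) • Ac N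
  have hM : IsUnit M.det := by
    rw [det_smul_one_add_smul_Ac hN, isUnit_iff_ne_zero, prod_ne_zero_iff]
    exact fun k _ => hinv k k.isLt
  have hli := linearIndependent_rows_of_det_ne_zero
    (det_of_eigvecTop_eigvecBot_ne_zero (N := N) (by omega) lam beta)
  refine ⟨fun k _ => ?_, fun n => ?_, hli, hli.span_eq_top_of_card_eq_finrank' (by simp)⟩
  · refine fromBlocks_zero₂₁_mulVec_sumElim_zero _ _ ?_
    rw [smul_mulVec, Ac_mulVec_uVec hN, smul_smul]
  · refine fromBlocks_zero₂₁_smul_one_mulVec_sumElim ?_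
    rw [show -(beta : ℂ) • 1 - (lam : ℂ) • Ac N = -M by module,
      neg_mulVec, mulVec_neg, neg_neg, mulVec_mulVec, mul_nonsing_inv _ hM, one_mulVec]

/-- under β + λω_k ≠ 0 for all k, the vectors (u_k,0) are eigenvectors of B
for λω_k, the vectors (−(βI+λA)⁻¹Ae_n, e_n) are eigenvectors for −β, and together these
2N vectors form a basis of ℂ^{2N}, so B is diagonalizable. -/
theorem stmt6 (N : ℕ) (hN : 2 ≤ N) (lam beta : ℝ) (hlam : 0 < lam) (hbeta : 0 < beta)
    (hinv : ∀ k < N, (beta : ℂ) + lam * (gam N k - 1) ≠ 0) :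
    (∀ k < N, (blockB N lam beta).mulVec (eigvecTop N k) =
        ((lam : ℂ) * (gam N k - 1)) • eigvecTop N k) ∧
    (∀ n : Fin N, (blockB N lam beta).mulVec (eigvecBot N lam beta n) =
        (-(beta : ℂ)) • eigvecBot N lam beta n) ∧
    LinearIndependent ℂ
      (Sum.elim (fun k : Fin N => eigvecTop N (k : ℕ)) (eigvecBot N lam beta)) ∧
    Submodule.span ℂ
        (Set.range (Sum.elim (fun k : Fin N => eigvecTop N (k : ℕ)) (eigvecBot N lam beta)))
      = ⊤ :=
  stmt6_general N hN lam beta hinv
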